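/- Let Γ be a countably infinite group and f ∈ ℤΓ well-balanced; let μ ∈ ℝΓ be given by μ_e = 0 and μ_s = −f_s/f_e for s ≠ e, assume Σ_{k=0}^∞ ‖μ^k‖_∞ < ∞, and set ω_s = f_e^{-1} Σ_{k=0}^∞ (μ^k)_s. Then for h ∈ ℤΓ one has Q(hω) = 0 in (ℝ/ℤ)^Γ if and only if h ∈ ℤΓf, i.e. h = uf for some u ∈ ℤΓ. (Consequently the map ℤΓ → (ℝ/ℤ)^Γ, h ↦ Q(hω), induces an isomorphism of the left ℤΓ-module ℤΓ/ℤΓf onto the homoclinic group of X_f.) -/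

import Mathlib

open Filter Topology
open scoped Classical

noncomputable section

/-- `f ∈ ℤΓ` is well-balanced: finitely supported, coefficients sum to `0`,
nonpositive off the identity, symmetric, and with support generating `Γ`. -/
def WellBalancedZ {G : Type*} [Group G] (f : G → ℤ) : Prop :=
  (Function.support f).Finite ∧ (∑ᶠ s : G, f s) = 0 ∧
    (∀ s : G, s ≠ 1 → f s ≤ 0) ∧ (∀ s : G, f s⁻¹ = f s) ∧
    Subgroup.closure (Function.support f) = ⊤

/-- `X_f = {x ∈ (ℝ/ℤ)^Γ : ∀ t, ∑_s f_s · x_{ts} = 0}`. -/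
def XfSet {G : Type*} [Group G] (f : G → ℤ) : Set (G → UnitAddCircle) :=
  {x | ∀ t : G, (∑ᶠ s : G, f s • x (t * s)) = 0}

/-- Convolution `(uv)_w = ∑_s u_s v_{s⁻¹ w}` in `ℝΓ`. -/
def convR {G : Type*} [Group G] (u v : G → ℝ) : G → ℝ :=
  fun w => ∑ᶠ s : G, u s * v (s⁻¹ * w)

/-- Convolution powers `u^k` in `ℝΓ`, with `u^0 = δ_e`. -/
def convPow {G : Type*} [Group G] (u : G → ℝ) : ℕ → G → ℝ
  | 0 => fun s => if s = 1 then 1 else 0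
  | k + 1 => convR u (convPow u k)

/-- `μ ∈ ℝΓ` associated to a well-balanced `f`: `μ_e = 0`, `μ_s = -f_s/f_e` for `s ≠ e`. -/
def muOf {G : Type*} [Group G] (f : G → ℝ) : G → ℝ :=
  fun s => if s = 1 then 0 else -(f s) / f 1

/-- `ω_s = f_e⁻¹ ∑_{k≥0} (μ^k)_s`. -/
def omegaOf {G : Type*} [Group G] (f : G → ℝ) : G → ℝ :=
  fun s => (f 1)⁻¹ * ∑' k : ℕ, convPow (muOf f) k s

/-- The element `ω` associated to a well-balanced `f ∈ ℤΓ`. -/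
def omegaOfZ {G : Type*} [Group G] (f : G → ℤ) : G → ℝ :=
  omegaOf (fun s => (f s : ℝ))

/-- `Q(hω) ∈ (ℝ/ℤ)^Γ` : the coordinatewise reduction mod `ℤ` of the convolution `hω`,
for `h ∈ ℤΓ`, where `(hω)_w = ∑_s h_s ω_{s⁻¹ w}`. -/
def homPt {G : Type*} [Group G] (f : G → ℤ) (h : G → ℤ) : G → UnitAddCircle :=
  fun w => ((∑ᶠ s : G, (h s : ℝ) * omegaOfZ f (s⁻¹ * w) : ℝ) : UnitAddCircle)

/-!
Since `f = f(e) (δ - μ)`, the Neumann series `∑ₖ μᵏ` makes `ω` a two-sided convolution inverse of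
`f`: `f ω = δ` directly, and `ω f = δ` because `f`, `μ`, and hence `ω` are symmetric. By dominated
convergence `ω` vanishes at infinity, hence so does `hω` for finitely supported `h`. If `h = u f`
then `hω = u (f ω) = u` is integral. Conversely, if `hω = u` is integer-valued, it vanishes at
infinity and so is finitely supported, and `u f = h (ω f) = h`.
-/

open Function
open scoped Pointwise

theorem finsum_comm_of_finite_support {α β M : Type*} [AddCommMonoid M] (f : α → β → M)
    (hf : (support (uncurry f)).Finite) :
    ∑ᶠ a, ∑ᶠ b, f a b = ∑ᶠ b, ∑ᶠ a, f a b := by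
  have hswap : (support (uncurry f ∘ Prod.swap)).Finite := by
    rw [support_comp_eq_preimage]
    exact hf.preimage Prod.swap_injective.injOn
  calc ∑ᶠ a, ∑ᶠ b, f a b = ∑ᶠ p, uncurry f p := (finsum_curry _ hf).symm
    _ = ∑ᶠ q : β × α, uncurry f q.swap := (finsum_comp_equiv (Equiv.prodComm β α)).symm
    _ = ∑ᶠ b, ∑ᶠ a, f a b := finsum_curry _ hswap

theorem tendsto_cofinite_zero_of_finite_support {α : Type*} {v : α → ℝ}
    (hv : (support v).Finite) : Tendsto v cofinite (𝓝 0) :=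
  tendsto_nhds_of_eventually_eq (hv.eventually_cofinite_notMem.mono fun _ => notMem_support.mp)

theorem abs_le_iSup_abs_of_finite_support {α : Type*} {v : α → ℝ} (hv : (support v).Finite)
    (s : α) : |v s| ≤ ⨆ t, |v t| := by
  refine le_ciSup (f := fun t => |v t|) (Set.Finite.bddAbove ?_) s
  refine (((hv.image fun t => |v t|)).insert 0).subset ?_
  rintro _ ⟨t, rfl⟩
  by_cases ht : v t = 0
  · simp [ht]
  · exact Or.inr ⟨t, ht, rfl⟩

theorem support_intCast_apply {α : Type*} (n : α → ℤ) :
    support (fun s => (n s : ℝ)) = support n := by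
  ext
  simp

theorem Int.support_finite_of_tendsto_cofinite {α : Type*} {n : α → ℤ}
    (hn : Tendsto (fun s => (n s : ℝ)) cofinite (𝓝 0)) : (support n).Finite := by
  have hsmall : ∀ᶠ s in cofinite, |(n s : ℝ)| < 1 := by
    simpa using hn.abs.eventually (gt_mem_nhds (by norm_num))
  refine (eventually_cofinite.mp hsmall).subset fun s hs hlt => hs ?_
  exact Int.abs_lt_one_iff.mp (by exact_mod_cast hlt)

section Convolution

variable {G : Type*} [Group G]

theorem convR_apply_eq_sum (u v : G → ℝ) {T : Finset G} (hT : support u ⊆ T) (w : G) :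
    convR u v w = ∑ s ∈ T, u s * v (s⁻¹ * w) :=
  finsum_eq_sum_of_support_subset _ ((support_mul_subset_left _ _).trans hT)

theorem support_convR_subset (u v : G → ℝ) : support (convR u v) ⊆ support u * support v := by
  intro w hw
  by_contra hw'
  refine hw (finsum_eq_zero_of_forall_eq_zero fun s => ?_)
  by_contra hs
  exact hw' ⟨s, left_ne_zero_of_mul hs, s⁻¹ * w, right_ne_zero_of_mul hs, mul_inv_cancel_left s w⟩

theorem convR_single_one_left (v : G → ℝ) : convR (Pi.single 1 1) v = v := by
  funext w
  rw [convR, finsum_eq_single _ 1 fun s hs => by simp [hs]]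
  simp

theorem convR_single_one_right (u : G → ℝ) : convR u (Pi.single 1 1) = u := by
  funext w
  rw [convR, finsum_eq_single _ w fun s hs => by simp [inv_mul_eq_one, hs]]
  simp

theorem convR_smul_left (c : ℝ) (u v : G → ℝ) : convR (c • u) v = c • convR u v := by
  funext w
  simp only [convR, Pi.smul_apply, smul_eq_mul, mul_finsum, mul_assoc]

theorem convR_smul_right (c : ℝ) (u v : G → ℝ) : convR u (c • v) = c • convR u v := by
  funext w
  simp only [convR, Pi.smul_apply, smul_eq_mul, mul_finsum, mul_left_comm c]

theorem convR_sub_left {u v : G → ℝ} (hu : (support u).Finite) (hv : (support v).Finite)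
    (x : G → ℝ) : convR (u - v) x = convR u x - convR v x := by
  funext w
  simp only [convR, Pi.sub_apply, sub_mul]
  exact finsum_sub_distrib (hu.subset (support_mul_subset_left _ _))
    (hv.subset (support_mul_subset_left _ _))

theorem convR_apply_inv (u v : G → ℝ) (w : G) :
    convR u v w⁻¹ = convR (fun s => v s⁻¹) (fun s => u s⁻¹) w := by
  rw [convR, convR, ← finsum_comp_equiv (Equiv.mulLeft w⁻¹)]
  refine finsum_congr fun r => ?_
  simp only [Equiv.coe_mulLeft, mul_inv_rev, inv_inv, mul_inv_cancel_right]
  ring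

/-- Both sides are the double sum `∑ s, ∑ r, a s * b (s⁻¹ * r) * c (r⁻¹ * w)`, taken in the two
possible orders. -/
theorem convR_assoc_of_finite {a b c : G → ℝ}
    (hfin : ∀ w, (support fun p : G × G => a p.1 * b (p.1⁻¹ * p.2) * c (p.2⁻¹ * w)).Finite) :
    convR (convR a b) c = convR a (convR b c) := by
  funext w
  have hR : convR a (convR b c) w = ∑ᶠ s, ∑ᶠ r, a s * b (s⁻¹ * r) * c (r⁻¹ * w) := by
    refine finsum_congr fun s => ?_
    rw [convR, mul_finsum, ← finsum_comp_equiv (Equiv.mulLeft s⁻¹)]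
    refine finsum_congr fun r => ?_
    simp only [Equiv.coe_mulLeft, mul_inv_rev, inv_inv, mul_assoc, mul_inv_cancel_left]
  rw [hR, finsum_comm_of_finite_support (fun s r => a s * b (s⁻¹ * r) * c (r⁻¹ * w)) (hfin w)]
  simp only [convR, finsum_mul]

theorem convR_assoc {a b : G → ℝ} (ha : (support a).Finite) (hb : (support b).Finite)
    (c : G → ℝ) : convR (convR a b) c = convR a (convR b c) := by
  refine convR_assoc_of_finite fun w => (ha.prod (ha.mul hb)).subset fun p hp => ?_
  have hab := left_ne_zero_of_mul hp
  exact ⟨left_ne_zero_of_mul hab, p.1, left_ne_zero_of_mul hab, p.1⁻¹ * p.2,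
    right_ne_zero_of_mul hab, mul_inv_cancel_left p.1 p.2⟩

theorem convR_assoc_of_finite_left_right {a c : G → ℝ} (ha : (support a).Finite)
    (b : G → ℝ) (hc : (support c).Finite) : convR (convR a b) c = convR a (convR b c) := by
  refine convR_assoc_of_finite fun w =>
    (ha.prod (hc.image fun q => w * q⁻¹)).subset fun p hp => ?_
  exact ⟨left_ne_zero_of_mul (left_ne_zero_of_mul hp), p.2⁻¹ * w, right_ne_zero_of_mul hp,
    by simp⟩

theorem convR_tsum {u : G → ℝ} (hu : (support u).Finite) {g : ℕ → G → ℝ}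
    (hg : ∀ s, Summable fun k => g k s) :
    convR u (fun s => ∑' k, g k s) = fun w => ∑' k, convR u (g k) w := by
  funext w
  have hT : support u ⊆ hu.toFinset := by simp
  simp only [convR_apply_eq_sum _ _ hT, ← tsum_mul_left]
  exact (Summable.tsum_finsetSum fun s _ => (hg _).mul_left _).symm

theorem tendsto_convR_cofinite {u v : G → ℝ} (hu : (support u).Finite)
    (hv : Tendsto v cofinite (𝓝 0)) : Tendsto (convR u v) cofinite (𝓝 0) := by
  have hT : support u ⊆ hu.toFinset := by simp
  rw [show convR u v = fun w => ∑ s ∈ hu.toFinset, u s * v (s⁻¹ * w) from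
    funext (convR_apply_eq_sum u v hT)]
  simpa using tendsto_finsetSum _ fun s _ =>
    (hv.comp (mul_right_injective s⁻¹).tendsto_cofinite).const_mul (u s)

end Convolution

section ConvPow

variable {G : Type*} [Group G] {u : G → ℝ}

theorem convPow_zero (u : G → ℝ) : convPow u 0 = Pi.single 1 1 := by
  funext s
  simp [convPow, Pi.single_apply]

theorem convPow_succ (u : G → ℝ) (k : ℕ) : convPow u (k + 1) = convR u (convPow u k) := rfl

theorem support_convPow_finite (hu : (support u).Finite) (k : ℕ) :
    (support (convPow u k)).Finite := by
  induction k with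
  | zero =>
    rw [convPow_zero]
    exact (Set.finite_singleton 1).subset Pi.support_single_subset
  | succ k ih => exact (hu.mul ih).subset (support_convR_subset _ _)

theorem convPow_succ' (hu : (support u).Finite) (k : ℕ) :
    convPow u (k + 1) = convR (convPow u k) u := by
  induction k with
  | zero => rw [convPow_succ, convPow_zero, convR_single_one_left, convR_single_one_right]
  | succ k ih =>
    calc convPow u (k + 2) = convR u (convR (convPow u k) u) := by rw [convPow_succ, ih]
      _ = convR (convPow u (k + 1)) u := (convR_assoc hu (support_convPow_finite hu k) u).symm

theorem convPow_inv (hu : (support u).Finite) (hinv : ∀ s, u s⁻¹ = u s) (k : ℕ) (s : G) :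
    convPow u k s⁻¹ = convPow u k s := by
  induction k generalizing s with
  | zero => simp [convPow_zero, Pi.single_apply]
  | succ k ih =>
    rw [convPow_succ, convR_apply_inv]
    simp only [ih, hinv]
    exact (congrFun (convPow_succ' hu k) s).symm

theorem summable_convPow_apply (hu : (support u).Finite)
    (hsum : Summable fun k => ⨆ t, |convPow u k t|) (s : G) :
    Summable fun k => convPow u k s :=
  hsum.of_norm_bounded fun k => abs_le_iSup_abs_of_finite_support (support_convPow_finite hu k) s

theorem convR_tsum_convPow (hu : (support u).Finite) (hsum : ∀ s, Summable fun k => convPow u k s) :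
    convR u (fun s => ∑' k, convPow u k s) = (fun s => ∑' k, convPow u k s) - Pi.single 1 1 := by
  rw [convR_tsum hu hsum]
  funext w
  rw [Pi.sub_apply, (hsum w).tsum_eq_zero_add, convPow_zero, add_sub_cancel_left]
  rfl

theorem tendsto_tsum_convPow_cofinite (hu : (support u).Finite)
    (hsum : Summable fun k => ⨆ t, |convPow u k t|) :
    Tendsto (fun s => ∑' k, convPow u k s) cofinite (𝓝 0) := by
  simpa using tendsto_tsum_of_dominated_convergence (g := fun _ => (0 : ℝ)) hsum
    (fun k => tendsto_cofinite_zero_of_finite_support (support_convPow_finite hu k))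
    (Eventually.of_forall fun s k =>
      abs_le_iSup_abs_of_finite_support (support_convPow_finite hu k) s)

end ConvPow

section Green

variable {G : Type*} [Group G]

theorem support_muOf_subset (f : G → ℝ) : support (muOf f) ⊆ support f := by
  intro s hs
  contrapose! hs
  rw [notMem_support] at hs ⊢
  simp [muOf, hs]

theorem muOf_inv {f : G → ℝ} (hinv : ∀ s, f s⁻¹ = f s) (s : G) : muOf f s⁻¹ = muOf f s := by
  simp [muOf, hinv]

theorem eq_smul_single_sub_muOf {f : G → ℝ} (h1 : f 1 ≠ 0) :
    f = f 1 • (Pi.single 1 1 - muOf f) := by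
  funext s
  by_cases hs : s = 1
  · subst hs
    simp [muOf]
  · simp [muOf, hs]
    field_simp

variable {f : G → ℝ} (hfin : (support f).Finite)
  (hsum : Summable fun k => ⨆ s, |convPow (muOf f) k s|)
include hfin hsum

theorem convR_omegaOf (h1 : f 1 ≠ 0) : convR f (omegaOf f) = Pi.single 1 1 := by
  have hμ := hfin.subset (support_muOf_subset f)
  have hδ : (support (Pi.single 1 1 : G → ℝ)).Finite :=
    (Set.finite_singleton 1).subset Pi.support_single_subset
  calc convR f (omegaOf f)
      = convR (f 1 • (Pi.single 1 1 - muOf f))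
          ((f 1)⁻¹ • fun s => ∑' k, convPow (muOf f) k s) := by
        rw [← eq_smul_single_sub_muOf h1]
        rfl
    _ = Pi.single 1 1 := by
        rw [convR_smul_left, convR_smul_right, convR_sub_left hδ hμ, convR_single_one_left,
          convR_tsum_convPow hμ (summable_convPow_apply hμ hsum), sub_sub_cancel, smul_smul,
          mul_inv_cancel₀ h1, one_smul]

theorem convR_omegaOf_right (h1 : f 1 ≠ 0) (hinv : ∀ s, f s⁻¹ = f s) :
    convR (omegaOf f) f = Pi.single 1 1 := by
  have hμ := hfin.subset (support_muOf_subset f)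
  have hΩ : ∀ s, omegaOf f s⁻¹ = omegaOf f s := fun s => by
    simp only [omegaOf, convPow_inv hμ (muOf_inv hinv)]
  funext w
  calc convR (omegaOf f) f w = convR f (omegaOf f) w⁻¹ := by
        rw [convR_apply_inv]
        simp only [hΩ, hinv]
    _ = (Pi.single 1 1 : G → ℝ) w := by
        rw [convR_omegaOf hfin hsum h1]
        simp [Pi.single_apply]

theorem tendsto_omegaOf : Tendsto (omegaOf f) cofinite (𝓝 0) := by
  have := (tendsto_tsum_convPow_cofinite (hfin.subset (support_muOf_subset f)) hsum).const_mul
    (f 1)⁻¹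
  rwa [mul_zero] at this

end Green

section Integral

variable {G : Type*} [Group G]

theorem WellBalancedZ.one_pos [Nontrivial G] {f : G → ℤ} (hf : WellBalancedZ f) : 0 < f 1 := by
  obtain ⟨hfin, hzero, hneg, -, hgen⟩ := hf
  by_contra! h1
  have hnonpos : ∀ s, f s ≤ 0 := fun s => if hs : s = 1 then hs ▸ h1 else hneg s hs
  have hT : support f ⊆ hfin.toFinset := by simp
  rw [finsum_eq_sum_of_support_subset f hT,
    Finset.sum_eq_zero_iff_of_nonpos fun s _ => hnonpos s] at hzero
  have hempty : support f = ∅ :=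
    Set.eq_empty_of_forall_notMem fun s hs => hs (hzero s (by simpa using hs))
  rw [hempty, Subgroup.closure_empty] at hgen
  exact bot_ne_top hgen

theorem intCast_finsum_mul_eq_convR {u : G → ℤ} (hu : (support u).Finite) (f : G → ℤ) (w : G) :
    ((∑ᶠ s, u s * f (s⁻¹ * w) : ℤ) : ℝ) = convR (fun s => (u s : ℝ)) (fun s => (f s : ℝ)) w := by
  simpa [convR] using (Int.castAddHom ℝ).map_finsum (f := fun s => u s * f (s⁻¹ * w))
    (hu.subset (support_mul_subset_left _ _))

theorem homPt_eq_zero_iff (f h : G → ℤ) :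
    homPt f h = 0 ↔ ∃ u : G → ℤ, convR (fun s => (h s : ℝ)) (omegaOfZ f) = fun w => (u w : ℝ) := by
  constructor
  · intro H
    choose u hu using fun w => (AddCircle.coe_eq_zero_iff 1).mp (congrFun H w)
    exact ⟨u, funext fun w => by simpa [convR] using (hu w).symm⟩
  · rintro ⟨u, hu⟩
    funext w
    change ((convR _ _ w : ℝ) : UnitAddCircle) = 0
    rw [hu]
    exact (AddCircle.coe_eq_zero_iff 1).mpr ⟨u w, by simp⟩

end Integral

theorem stmt8_general {G : Type*} [Group G] [Infinite G]
    (f : G → ℤ) (hf : WellBalancedZ f)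
    (hsum : Summable (fun k : ℕ => ⨆ s : G, |convPow (muOf (fun s => (f s : ℝ))) k s|))
    (h : G → ℤ) (hh : (Function.support h).Finite) :
    homPt f h = 0 ↔
      ∃ u : G → ℤ, (Function.support u).Finite ∧
        ∀ w : G, h w = ∑ᶠ s : G, u s * f (s⁻¹ * w) := by
  have hF : (support fun s => (f s : ℝ)).Finite := by rw [support_intCast_apply]; exact hf.1
  have hH : (support fun s => (h s : ℝ)).Finite := by rwa [support_intCast_apply]
  have hF1 : (f 1 : ℝ) ≠ 0 := by exact_mod_cast hf.one_pos.ne'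
  have hFinv : ∀ s, (f s⁻¹ : ℝ) = f s := fun s => by rw [hf.2.2.2.1 s]
  rw [homPt_eq_zero_iff, omegaOfZ]
  constructor
  · rintro ⟨u, hu⟩
    have hufin : (support u).Finite := Int.support_finite_of_tendsto_cofinite
      (hu ▸ tendsto_convR_cofinite hH (tendsto_omegaOf hF hsum))
    refine ⟨u, hufin, fun w => Int.cast_injective (α := ℝ) ?_⟩
    rw [intCast_finsum_mul_eq_convR hufin, ← hu, convR_assoc_of_finite_left_right hH _ hF,
      convR_omegaOf_right hF hsum hF1 hFinv, convR_single_one_right]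
  · rintro ⟨u, hufin, hhu⟩
    have hU : (support fun s => (u s : ℝ)).Finite := by rwa [support_intCast_apply]
    have hH_eq : (fun s => (h s : ℝ)) = convR (fun s => (u s : ℝ)) fun s => (f s : ℝ) :=
      funext fun w => by rw [hhu, intCast_finsum_mul_eq_convR hufin]
    exact ⟨u, by rw [hH_eq, convR_assoc hU hF, convR_omegaOf hF hsum hF1, convR_single_one_right]⟩

/-- For `h ∈ ℤΓ`, `Q(hω) = 0` iff `h ∈ ℤΓf`. -/
theorem stmt8 {G : Type*} [Group G] [Countable G] [Infinite G]
    (f : G → ℤ) (hf : WellBalancedZ f)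
    (hsum : Summable (fun k : ℕ => ⨆ s : G, |convPow (muOf (fun s => (f s : ℝ))) k s|))
    (h : G → ℤ) (hh : (Function.support h).Finite) :
    homPt f h = 0 ↔
      ∃ u : G → ℤ, (Function.support u).Finite ∧
        ∀ w : G, h w = ∑ᶠ s : G, u s * f (s⁻¹ * w) :=
  stmt8_general f hf hsum h hh
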